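/- For every g ∈ A₁ one has |ĝ(α)| ≤ ĝ(0) for all α ∈ ℝ and consequently ρ₁(g) ≥ 0; moreover, if g is not identically zero, then ρ₁(g) > 0. -/

import Mathlib

open MeasureTheory Filter
open scoped Classical

noncomputable section

/-- The Fourier transform `ĝ(α) = ∫ g(x) e^{-2πiαx} dx` of a real-valued function. -/
def fourierT (g : ℝ → ℝ) (α : ℝ) : ℂ :=
  ∫ x : ℝ, (g x : ℂ) * Complex.exp (-(2 * Real.pi * α * x : ℝ) * Complex.I)

/-- The class `A₁` of continuous, even, non-negative functions `g ∈ L¹(ℝ)`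
with `ĝ(α) ≤ 0` for `|α| ≥ 1` (such `ĝ` is real-valued since `g` is even and real). -/
def memA1 (g : ℝ → ℝ) : Prop :=
  Continuous g ∧ (∀ x, g (-x) = g x) ∧ (∀ x, 0 ≤ g x) ∧ MeasureTheory.Integrable g ∧
    ∀ α : ℝ, 1 ≤ |α| → (fourierT g α).re ≤ 0

/-- The functional `ρ₁(g) = ĝ(0) + ∫_{-1}^{1} ĝ(α)|α| dα`. -/
def rho1 (g : ℝ → ℝ) : ℝ :=
  (fourierT g 0).re + ∫ α in (-1 : ℝ)..1, (fourierT g α).re * |α|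

/-- The constant `C₁ = inf ρ₁(g)/g(0)` over nonzero `g ∈ A₁` with `g(0) > 0`. -/
def C1 : ℝ :=
  sInf {c : ℝ | ∃ g : ℝ → ℝ, memA1 g ∧ g ≠ 0 ∧ 0 < g 0 ∧ c = rho1 g / g 0}

/-! Since `g ≥ 0`, `|ĝ(α)| ≤ ∫ g = ĝ(0)`, so the weight `ĝ(α) + ĝ(0)` is nonnegative; as
`∫_{-1}^{1} |α| dα = 1`, `ρ₁(g) = ∫_{-1}^{1} (ĝ(α) + ĝ(0)) |α| dα ≥ 0`. If `g ≢ 0`, continuity of `g`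
gives `ĝ(0) = ∫ g > 0`, and the continuous integrand is then positive at small `α ≠ 0`. -/

theorem integral_abs_neg_one_one : ∫ x in (-1 : ℝ)..1, |x| = 1 := by
  have hcont : ∀ a b : ℝ, IntervalIntegrable (fun x : ℝ => |x|) volume a b :=
    fun a b => continuous_abs.intervalIntegrable a b
  have hright : ∫ x in (0 : ℝ)..1, |x| = 1 / 2 := by
    rw [intervalIntegral.integral_congr (f := fun x : ℝ => |x|) (g := fun x => x)
      fun x hx => abs_of_nonneg (Set.uIcc_of_le (zero_le_one (α := ℝ)) ▸ hx).1]
    norm_num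
  have hleft : ∫ x in (-1 : ℝ)..0, |x| = 1 / 2 := by
    have := intervalIntegral.integral_comp_neg (a := 0) (b := 1) fun x : ℝ => |x|
    simp only [abs_neg, neg_zero] at this
    rw [← this, hright]
  rw [← intervalIntegral.integral_add_adjacent_intervals (hcont (-1) 0) (hcont 0 1), hleft, hright]
  norm_num

theorem integral_mul_abs_pos {φ : ℝ → ℝ} (hφ : Continuous φ) (hφ_nonneg : ∀ x, 0 ≤ φ x)
    (hφ0 : 0 < φ 0) : 0 < ∫ x in (-1 : ℝ)..1, φ x * |x| := by
  have hnear : ∀ᶠ x in nhdsWithin 0 (Set.Ioo 0 1), 0 < φ x :=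
    nhdsWithin_le_nhds ((hφ.tendsto 0).eventually (lt_mem_nhds hφ0))
  have : (nhdsWithin (0 : ℝ) (Set.Ioo 0 1)).NeBot := left_nhdsWithin_Ioo_neBot zero_lt_one
  obtain ⟨c, hφc, hc⟩ := (hnear.and self_mem_nhdsWithin).exists
  refine intervalIntegral.integral_pos (by norm_num) (by fun_prop)
    (fun x _ => mul_nonneg (hφ_nonneg x) (abs_nonneg x)) ⟨c, ?_, ?_⟩
  · exact ⟨by linarith [hc.1], hc.2.le⟩
  · exact mul_pos hφc (abs_pos.2 hc.1.ne')

theorem fourierT_eq_fourier (g : ℝ → ℝ) :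
    fourierT g = FourierTransform.fourier (fun x : ℝ => (g x : ℂ)) := by
  ext α
  rw [Real.fourier_real_eq_integral_exp_smul]
  refine integral_congr_ae (Eventually.of_forall fun x => ?_)
  simp only [smul_eq_mul, mul_comm (g x : ℂ)]
  congr 2
  push_cast
  ring

theorem continuous_fourierT {g : ℝ → ℝ} (hg : Integrable g) : Continuous (fourierT g) := by
  rw [fourierT_eq_fourier]
  exact VectorFourier.fourierIntegral_continuous Real.continuous_fourierChar continuous_inner
    (hg.ofReal (𝕜 := ℂ))

theorem re_fourierT_zero (g : ℝ → ℝ) : (fourierT g 0).re = ∫ x, g x := by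
  simp only [fourierT, Complex.ofReal_zero, mul_zero, zero_mul, neg_zero, Complex.exp_zero,
    mul_one]
  exact congrArg Complex.re integral_ofReal

theorem norm_fourierT_le_integral {g : ℝ → ℝ} (hg : ∀ x, 0 ≤ g x) (α : ℝ) :
    ‖fourierT g α‖ ≤ ∫ x, g x :=
  (norm_integral_le_integral_norm _).trans_eq <| integral_congr_ae <| Eventually.of_forall
    fun x => by simp [Complex.norm_exp, abs_of_nonneg (hg x)]

theorem rho1_eq_integral {g : ℝ → ℝ} (hg : Integrable g) :
    rho1 g = ∫ α in (-1 : ℝ)..1, ((fourierT g α).re + (fourierT g 0).re) * |α| := by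
  have hre : Continuous fun α => (fourierT g α).re :=
    Complex.continuous_re.comp (continuous_fourierT hg)
  simp only [add_mul]
  rw [intervalIntegral.integral_add (Continuous.intervalIntegrable (by fun_prop) _ _)
    (Continuous.intervalIntegrable (by fun_prop) _ _), intervalIntegral.integral_const_mul,
    integral_abs_neg_one_one, mul_one, rho1, add_comm]

/-- For every `g ∈ A₁` one has `|ĝ(α)| ≤ ĝ(0)` for all `α ∈ ℝ`, and consequently
`ρ₁(g) ≥ 0`; moreover, if `g` is not identically zero, then `ρ₁(g) > 0`. -/
theorem statement11 (g : ℝ → ℝ) (hg : memA1 g) :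
    (∀ α : ℝ, ‖fourierT g α‖ ≤ (fourierT g 0).re) ∧
    0 ≤ rho1 g ∧ (g ≠ 0 → 0 < rho1 g) := by
  obtain ⟨hcont, -, hnonneg, hint, -⟩ := hg
  have hbound (α : ℝ) : ‖fourierT g α‖ ≤ (fourierT g 0).re :=
    re_fourierT_zero g ▸ norm_fourierT_le_integral hnonneg α
  have hweight_nonneg (α : ℝ) : 0 ≤ (fourierT g α).re + (fourierT g 0).re := by
    linarith [neg_le_of_abs_le ((Complex.abs_re_le_norm _).trans (hbound α))]
  refine ⟨hbound, ?_, fun hne => ?_⟩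
  · rw [rho1_eq_integral hint]
    exact intervalIntegral.integral_nonneg (by norm_num)
      fun α _ => mul_nonneg (hweight_nonneg α) (abs_nonneg α)
  · obtain ⟨x, hx⟩ := Function.ne_iff.1 hne
    have hpos : 0 < (fourierT g 0).re :=
      re_fourierT_zero g ▸ integral_pos_of_integrable_nonneg_nonzero hcont hint hnonneg hx
    rw [rho1_eq_integral hint]
    exact integral_mul_abs_pos
      ((Complex.continuous_re.comp (continuous_fourierT hint)).add continuous_const)
      hweight_nonneg (by linarith)

end
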